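/- Let h : ℝ → ℝ be a continuous probability density function supported on [0,1] with cumulative distribution function H, let 0 < p' < 1 and let π₀ ∈ [0, 1 − p') with p₀ = p'/(1 − π₀). If ∫₀^{1−p'} ((π₀ − π)/(1 − π)) h(π) dπ = 0 and H(1 − p') > 0, then p₀ = (1/H(1 − p')) ∫₀^{1−p'} (p'/(1 − π)) h(π) dπ. -/
import Mathlib


open MeasureTheory

/-- Under the paper's Assumption 1, the original support probability
`p₀ = p'/(1 − π₀)` equals `φ(p') = (1/H(1−p')) ∫₀^{1−p'} (p'/(1−π)) h(π) dπ`. -/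
theorem assumption_implies_p0_eq_phi
    (h H : ℝ → ℝ) (p' π₀ p₀ : ℝ)
    (hcont : Continuous h) (hnn : ∀ x, 0 ≤ h x)
    (hsupp : ∀ x, x ∉ Set.Icc (0 : ℝ) 1 → h x = 0)
    (hdens : (∫ x, h x) = 1)
    (hH : ∀ x, H x = ∫ t in Set.Iic x, h t)
    (hp'0 : 0 < p') (hp'1 : p' < 1)
    (hπ₀ : π₀ ∈ Set.Ico (0 : ℝ) (1 - p'))
    (hp₀ : p₀ = p' / (1 - π₀))
    (hassump : (∫ π in (0 : ℝ)..(1 - p'), ((π₀ - π) / (1 - π)) * h π) = 0)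
    (hHpos : 0 < H (1 - p')) :
    p₀ = (1 / H (1 - p')) * ∫ π in (0 : ℝ)..(1 - p'), (p' / (1 - π)) * h π := by
  obtain ⟨hπ₀0, hπ₀lt⟩ := hπ₀
  have h1π₀ : 0 < 1 - π₀ := by linarith
  have hb0 : (0 : ℝ) ≤ 1 - p' := by linarith
  have huIcc : Set.uIcc (0 : ℝ) (1 - p') = Set.Icc 0 (1 - p') :=
    Set.uIcc_of_le hb0
  -- on the interval, 1 - π ≥ p' > 0
  have hpos : ∀ x ∈ Set.uIcc (0 : ℝ) (1 - p'), (0 : ℝ) < 1 - x := by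
    intro x hx
    rw [huIcc] at hx
    have := hx.2
    linarith
  -- integrability of h (continuous with compact support)
  have hhint : IntervalIntegrable h volume 0 (1 - p') :=
    (hcont.continuousOn).intervalIntegrable
  have hgcont : ContinuousOn (fun x => h x / (1 - x)) (Set.uIcc (0:ℝ) (1 - p')) := by
    apply ContinuousOn.div hcont.continuousOn (by fun_prop)
    intro x hx
    exact ne_of_gt (hpos x hx)
  have hgint : IntervalIntegrable (fun x => h x / (1 - x)) volume 0 (1 - p') :=
    hgcont.intervalIntegrable
  set I : ℝ := ∫ π in (0 : ℝ)..(1 - p'), h π / (1 - π) with hI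
  -- h is integrable on ℝ
  have hHC : HasCompactSupport h := by
    apply HasCompactSupport.intro (isCompact_Icc (a := (0:ℝ)) (b := 1))
    exact hsupp
  have hint : Integrable h := hcont.integrable_of_hasCompactSupport hHC
  -- H (1-p') equals the interval integral of h from 0 to 1-p'
  have hH0 : (∫ t in Set.Iic (0:ℝ), h t) = 0 := by
    rw [integral_Iic_eq_integral_Iio]
    apply setIntegral_eq_zero_of_forall_eq_zero
    intro x hx
    exact hsupp x (by simp at hx ⊢; intro h0; linarith)
  have hHval : H (1 - p') = ∫ π in (0 : ℝ)..(1 - p'), h π := by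
    rw [hH, ← intervalIntegral.integral_Iic_sub_Iic hint.integrableOn hint.integrableOn,
      hH0, sub_zero]
  -- rewrite the assumption integrand
  have hrw : (∫ π in (0 : ℝ)..(1 - p'), ((π₀ - π) / (1 - π)) * h π)
      = (π₀ - 1) * I + H (1 - p') := by
    have : (∫ π in (0 : ℝ)..(1 - p'), ((π₀ - π) / (1 - π)) * h π)
        = ∫ π in (0 : ℝ)..(1 - p'), ((π₀ - 1) * (h π / (1 - π)) + h π) := by
      apply intervalIntegral.integral_congr
      intro x hx
      have hx1 : (1 : ℝ) - x ≠ 0 := ne_of_gt (hpos x hx)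
      field_simp
      ring
    rw [this, intervalIntegral.integral_add ((hgint.const_mul _)) hhint,
      intervalIntegral.integral_const_mul, hHval, hI]
  have hIval : I = H (1 - p') / (1 - π₀) := by
    have : (π₀ - 1) * I + H (1 - p') = 0 := by rw [← hrw]; exact hassump
    field_simp
    linarith [this]
  have hgoal : (∫ π in (0 : ℝ)..(1 - p'), (p' / (1 - π)) * h π) = p' * I := by
    rw [hI, ← intervalIntegral.integral_const_mul]
    apply intervalIntegral.integral_congr
    intro x hx
    have hx1 : (1 : ℝ) - x ≠ 0 := ne_of_gt (hpos x hx)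
    field_simp
  rw [hgoal, hIval, hp₀]
  field_simp
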